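/- Assume n ≥ 1 and let D : A → A be a k-linear map satisfying the graded Leibniz rule with D(x_i) = x_1 * x_i for all i ∈ Fin n. For m ≥ 1, consider the k-vector space V of polynomials homogeneous of degree 2m (together with 0) and its subspace W = { D g | g ∈ A homogeneous of degree 2m−1 } (together with 0). Then the quotient vector space V/W has finite dimension equal to the number of monomials of degree 2m in n−1 variables, namely Nat.choose (2m + n − 2) (2m). -/

import Mathlib

/-!
Since `D` obeys the graded Leibniz rule and `D xᵢ = x₁ xᵢ`, induction over monomials shows that
`D g = x₁ g` for `g` homogeneous of odd degree and `D g = 0` for even degree: with `ε d = 1` for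
odd `d` and `0` otherwise, `ε d + (-1) ^ d ε e = ε (d + e)`. Hence `W = x₁ · A₂ₘ₋₁`, which has the
dimension of `A₂ₘ₋₁` because `x₁` is a nonzerodivisor, and
`dim V/W = C(n + 2m - 1, 2m) - C(n + 2m - 2, 2m - 1) = C(n + 2m - 2, 2m)` by Pascal's rule.
-/

open MvPolynomial

theorem Finsupp.natCard_degree_eq_choose (σ : Type*) (N : ℕ) :
    Nat.card {s : σ →₀ ℕ // s.degree = N} = (Nat.card σ + N - 1).choose N := by
  classical
  rw [← Sym.natCard_sym_eq_choose]
  exact Nat.card_congr (Sym.equivNatSum σ N).symm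

namespace MvPolynomial

variable {σ R : Type*} [CommRing R]

def IsGradedLeibniz (D : MvPolynomial σ R →ₗ[R] MvPolynomial σ R) : Prop :=
  ∀ (d : ℕ) (a b : MvPolynomial σ R), a.IsHomogeneous d →
    D (a * b) = D a * b + ((-1 : R) ^ d) • (a * D b)

namespace IsGradedLeibniz

variable {D : MvPolynomial σ R →ₗ[R] MvPolynomial σ R} {p : MvPolynomial σ R}

theorem map_one (hD : IsGradedLeibniz D) : D 1 = 0 := by
  simpa using hD 0 1 1 (isHomogeneous_one σ R)

theorem map_C (hD : IsGradedLeibniz D) (r : R) : D (C r) = 0 := by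
  rw [C_eq_smul_one, map_smul, hD.map_one, smul_zero]

theorem map_mul_of_isHomogeneous (hD : IsGradedLeibniz D) {a b : MvPolynomial σ R} {d e : ℕ}
    (ha : a.IsHomogeneous d) (hDa : D a = (if Odd d then p else 0) * a)
    (hDb : D b = (if Odd e then p else 0) * b) :
    D (a * b) = (if Odd (d + e) then p else 0) * (a * b) := by
  rw [hD d a b ha, hDa, hDb]
  rcases Nat.even_or_odd d with hd | hd <;> rcases Nat.even_or_odd e with he | he <;>
    simp [hd, he, hd.neg_one_pow, Nat.odd_add, Nat.not_odd_iff_even.mpr,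
      Nat.not_even_iff_odd.mpr] <;> ring

theorem map_X_pow (hD : IsGradedLeibniz D) (hX : ∀ i, D (X i) = p * X i) (i : σ) (e : ℕ) :
    D (X i ^ e) = (if Odd e then p else 0) * X i ^ e := by
  induction e with
  | zero => simp [hD.map_one]
  | succ e ih =>
    rw [pow_succ', add_comm]
    exact hD.map_mul_of_isHomogeneous (isHomogeneous_X R i) (by simp [hX]) ih

theorem map_monomial (hD : IsGradedLeibniz D) (hX : ∀ i, D (X i) = p * X i) (s : σ →₀ ℕ)
    (r : R) : D (monomial s r) = (if Odd s.degree then p else 0) * monomial s r := by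
  induction s using Finsupp.induction with
  | zero => simp [hD.map_C]
  | single_add i e s _ _ ih =>
    rw [monomial_single_add, map_add, Finsupp.degree_single]
    exact hD.map_mul_of_isHomogeneous (isHomogeneous_X_pow i e) (hD.map_X_pow hX i e) ih

theorem map_of_isHomogeneous (hD : IsGradedLeibniz D) (hX : ∀ i, D (X i) = p * X i)
    {d : ℕ} {g : MvPolynomial σ R} (hg : g.IsHomogeneous d) :
    D g = (if Odd d then p else 0) * g := by
  conv_lhs => rw [g.as_sum]
  conv_rhs => rw [g.as_sum, Finset.mul_sum]
  refine (map_sum D _ _).trans (Finset.sum_congr rfl fun s hs => ?_)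
  have hs_deg : s.degree = d := by_contra fun h => mem_support_iff.mp hs (hg.coeff_eq_zero h)
  rw [hD.map_monomial hX, hs_deg]

end IsGradedLeibniz

instance [Finite σ] (N : ℕ) : Module.Finite R (homogeneousSubmodule σ R N) :=
  Module.Finite.iff_fg.mpr (homogeneousSubmodule_fg σ R N)

theorem finrank_homogeneousSubmodule [Nontrivial R] (N : ℕ) :
    Module.finrank R (homogeneousSubmodule σ R N) = (Nat.card σ + N - 1).choose N := by
  rw [← Finsupp.natCard_degree_eq_choose, homogeneousSubmodule_eq_finsupp_supported]
  exact Module.finrank_eq_nat_card_basis (basisRestrictSupport R {s : σ →₀ ℕ | s.degree = N})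

end MvPolynomial

theorem Submodule.map_eq_map_of_eqOn {R M N : Type*} [Semiring R] [AddCommMonoid M]
    [AddCommMonoid N] [Module R M] [Module R N] {f g : M →ₗ[R] N} {P : Submodule R M}
    (h : Set.EqOn f g P) : P.map f = P.map g :=
  SetLike.coe_injective (by simpa only [Submodule.map_coe] using Set.image_congr h)

theorem Submodule.finrank_quotient_comap_map_add_finrank {K M N : Type*} [DivisionRing K]
    [AddCommGroup M] [AddCommGroup N] [Module K M] [Module K N] {f : M →ₗ[K] N}
    (hf : Function.Injective f) {P : Submodule K M} {V : Submodule K N} [FiniteDimensional K V]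
    (hPV : P.map f ≤ V) :
    Module.finrank K (V ⧸ (P.map f).comap V.subtype) + Module.finrank K P =
      Module.finrank K V := by
  rw [(Submodule.equivMapOfInjective f hf P).finrank_eq,
    ← (Submodule.comapSubtypeEquivOfLe hPV).finrank_eq]
  exact Submodule.finrank_quotient_add_finrank _

theorem stmt_8_general (k : Type*) [Field k] (n : ℕ) (hn : 1 ≤ n)
    (D : MvPolynomial (Fin n) k →ₗ[k] MvPolynomial (Fin n) k)
    (hLeib : ∀ (d : ℕ) (a b : MvPolynomial (Fin n) k), a.IsHomogeneous d →
      D (a * b) = D a * b + ((-1 : k) ^ d) • (a * D b))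
    (hD : ∀ i : Fin n, D (X i) = X ⟨0, hn⟩ * X i)
    (m : ℕ) (hm : 1 ≤ m)
    (V : Submodule k (MvPolynomial (Fin n) k))
    (hV : V = homogeneousSubmodule (Fin n) k (2 * m))
    (W : Submodule k V)
    (hW : W = (Submodule.map D (homogeneousSubmodule (Fin n) k (2 * m - 1))).comap V.subtype) :
    FiniteDimensional k (V ⧸ W) ∧
      Module.finrank k (V ⧸ W) = Nat.choose (2 * m + n - 2) (2 * m) := by
  subst hV hW
  set x₁ : MvPolynomial (Fin n) k := X ⟨0, hn⟩
  set P := homogeneousSubmodule (Fin n) k (2 * m - 1)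
  have hodd : Odd (2 * m - 1) := ⟨m - 1, by omega⟩
  have hD_eq : P.map D = P.map (LinearMap.mulLeft k x₁) :=
    Submodule.map_eq_map_of_eqOn fun g hg => by
      rw [IsGradedLeibniz.map_of_isHomogeneous hLeib hD hg, if_pos hodd]
      rfl
  have hle : P.map (LinearMap.mulLeft k x₁) ≤ homogeneousSubmodule (Fin n) k (2 * m) := by
    rintro _ ⟨g, hg, rfl⟩
    simpa [show 1 + (2 * m - 1) = 2 * m by omega] using (isHomogeneous_X k _).mul hg
  have hinj : Function.Injective (LinearMap.mulLeft k x₁) := mul_right_injective₀ (X_ne_zero _)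
  have hrank := Submodule.finrank_quotient_comap_map_add_finrank hinj hle
  rw [← hD_eq, finrank_homogeneousSubmodule, finrank_homogeneousSubmodule, Nat.card_fin] at hrank
  have hpascal := Nat.choose_eq_choose_pred_add (n := n + 2 * m - 1) (k := 2 * m) (by omega)
    (by omega)
  refine ⟨inferInstance, ?_⟩
  rw [show 2 * m + n - 2 = n + 2 * m - 1 - 1 by omega]
  rw [show n + (2 * m - 1) - 1 = n + 2 * m - 1 - 1 by omega] at hrank
  omega

/-- For the DG polynomial algebra `A(1,0,…,0)` and `m ≥ 1`, the quotient of
the space `V` of homogeneous polynomials of degree `2m` by the subspace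
`W = { D g | g homogeneous of degree 2m-1 }` is finite-dimensional of dimension
`Nat.choose (2m + n - 2) (2m)`, the number of degree-`2m` monomials in `n - 1` variables. -/
theorem stmt_8 (k : Type*) [Field k] [CharZero k] (n : ℕ) (hn : 1 ≤ n)
    (D : MvPolynomial (Fin n) k →ₗ[k] MvPolynomial (Fin n) k)
    (hLeib : ∀ (d : ℕ) (a b : MvPolynomial (Fin n) k), a.IsHomogeneous d →
      D (a * b) = D a * b + ((-1 : k) ^ d) • (a * D b))
    (hD : ∀ i : Fin n, D (X i) = X ⟨0, hn⟩ * X i)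
    (m : ℕ) (hm : 1 ≤ m)
    (V : Submodule k (MvPolynomial (Fin n) k))
    (hV : V = homogeneousSubmodule (Fin n) k (2 * m))
    (W : Submodule k V)
    (hW : W = (Submodule.map D (homogeneousSubmodule (Fin n) k (2 * m - 1))).comap V.subtype) :
    FiniteDimensional k (V ⧸ W) ∧
      Module.finrank k (V ⧸ W) = Nat.choose (2 * m + n - 2) (2 * m) :=
  stmt_8_general k n hn D hLeib hD m hm V hV W hW
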